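/- arXiv:2011.13768 — 2 statements merged into one kernel-verified Lean document; each statement's English description precedes it below -/
import Mathlib

section
/- Let D be a triangulated category and consider a morphism between two distinguished triangles (u,v,w): B[-1] → C → A → B and (u',v',w'): B'[-1] → C' → A' → B', given by maps α: A → A' and β: B → B' with w'∘α = β∘w. If Hom(B, A') = 0 and Hom(A, B'[-1]) = 0, then there exists a unique morphism γ: C → C' such that (β[-1], γ, α) is a morphism of distinguished triangles. -/
open CategoryTheory CategoryTheory.Limits CategoryTheory.Pretriangulated

/-!
Existence of `γ` is the axiom completing a morphism of distinguished triangles. For uniqueness,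
the difference `d` of two such maps satisfies `v' ∘ d = 0` and `d ∘ u = 0`. The second makes `d`
factor as `g ∘ v` with `g : A ⟶ C'`; then `v' ∘ g` vanishes on `v`, so it factors through `w` via a
map `B ⟶ A'`, which is zero. Hence `g` factors through `u'` via a map `A ⟶ B'[-1]`, which is
zero as well.
-/

namespace CategoryTheory.Pretriangulated

variable {D : Type*} [Category D] [Preadditive D] [HasZeroObject D] [HasShift D ℤ]
  [∀ n : ℤ, (shiftFunctor D n).Additive] [Pretriangulated D]

lemma exists_eq_mor₁_comp_of_mor₃_comp_shift_map_eq_zero {T : Triangle D}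
    (hT : T ∈ distTriang D) {X : D} (f : T.obj₁ ⟶ X) (hf : T.mor₃ ≫ f⟦(1 : ℤ)⟧' = 0) :
    ∃ g : T.obj₂ ⟶ X, f = T.mor₁ ≫ g := by
  refine Triangle.yoneda_exact₂ _ (inv_rot_of_distTriang T hT) f ?_
  let e := shiftFunctorCompIsoId D (1 : ℤ) (-1) (add_neg_cancel 1)
  change (-(T.mor₃⟦(-1 : ℤ)⟧' ≫ e.hom.app T.obj₁)) ≫ f = 0
  have hnat : e.hom.app T.obj₁ ≫ f = f⟦(1 : ℤ)⟧'⟦(-1 : ℤ)⟧' ≫ e.hom.app X :=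
    (e.hom.naturality f).symm
  rw [Preadditive.neg_comp, neg_eq_zero, Category.assoc, hnat, ← Functor.map_comp_assoc, hf,
    Functor.map_zero, zero_comp]

lemma eq_zero_of_comp_mor₁_eq_zero_of_mor₃_comp_shift_map_eq_zero {T T' : Triangle D}
    (hT : T ∈ distTriang D) (hT' : T' ∈ distTriang D)
    (h₁ : ∀ f : T.obj₃ ⟶ T'.obj₂, f = 0)
    (h₂ : ∀ f : T.obj₂ ⟶ (T'.obj₃)⟦(-1 : ℤ)⟧, f = 0)
    (d : T.obj₁ ⟶ T'.obj₁) (hd₁ : d ≫ T'.mor₁ = 0) (hd₃ : T.mor₃ ≫ d⟦(1 : ℤ)⟧' = 0) :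
    d = 0 := by
  obtain ⟨g, rfl⟩ := exists_eq_mor₁_comp_of_mor₃_comp_shift_map_eq_zero hT d hd₃
  have hg : g ≫ T'.mor₁ = 0 := by
    obtain ⟨h, hh⟩ := Triangle.yoneda_exact₂ T hT (g ≫ T'.mor₁) (by simpa using hd₁)
    rw [hh, h₁ h, comp_zero]
  obtain ⟨k, rfl⟩ := Triangle.coyoneda_exact₂ _ (inv_rot_of_distTriang T' hT') g hg
  obtain rfl : k = (0 : T.obj₂ ⟶ T'.invRotate.obj₁) := h₂ k
  rw [zero_comp]
  exact comp_zero

end CategoryTheory.Pretriangulated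

/-- Let `D` be a triangulated category and consider two distinguished
triangles `B[-1] → C → A → B` and `B'[-1] → C' → A' → B'` (encoded as distinguished
triangles `C → A → B → C⟦1⟧` and `C' → A' → B' → C'⟦1⟧`), together with morphisms
`α : A ⟶ A'` and `β : B ⟶ B'` commuting with the maps `w, w'`.  If `Hom(B, A') = 0`
and `Hom(A, B'[-1]) = 0`, then there exists a unique morphism `γ : C ⟶ C'` extending
`(α, β)` to a morphism of distinguished triangles. -/
theorem stmt0 {D : Type*} [Category D] [Preadditive D] [HasZeroObject D]
    [HasShift D ℤ] [∀ n : ℤ, (shiftFunctor D n).Additive] [Pretriangulated D]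
    (T T' : Triangle D) (hT : T ∈ distTriang D) (hT' : T' ∈ distTriang D)
    (α : T.obj₂ ⟶ T'.obj₂) (β : T.obj₃ ⟶ T'.obj₃)
    (hcomm : T.mor₂ ≫ β = α ≫ T'.mor₂)
    (h1 : ∀ f : T.obj₃ ⟶ T'.obj₂, f = 0)
    (h2 : ∀ f : T.obj₂ ⟶ (T'.obj₃)⟦(-1 : ℤ)⟧, f = 0) :
    ∃! γ : T.obj₁ ⟶ T'.obj₁,
      T.mor₁ ≫ α = γ ≫ T'.mor₁ ∧ T.mor₃ ≫ γ⟦(1 : ℤ)⟧' = β ≫ T'.mor₃ := by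
  obtain ⟨γ, hγ₁, hγ₃⟩ := complete_distinguished_triangle_morphism₁ T T' hT hT' α β hcomm
  refine ⟨γ, ⟨hγ₁, hγ₃⟩, fun γ' ⟨hγ'₁, hγ'₃⟩ => ?_⟩
  rw [← sub_eq_zero]
  refine eq_zero_of_comp_mor₁_eq_zero_of_mor₃_comp_shift_map_eq_zero hT hT' h1 h2 _ ?_ ?_
  · rw [Preadditive.sub_comp, ← hγ₁, ← hγ'₁, sub_self]
  · rw [Functor.map_sub, Preadditive.comp_sub, hγ₃, hγ'₃, sub_self]
end

section
/- Let D be a triangulated category, and suppose given a 'Postnikov diagram': a complex A_m → A_{m-1} → ⋯ → A_1 → A_0 with composites ∂_i = α_{i-1}∘d_i, together with distinguished triangles C_i → A_i → C_{i-1} → C_i[1] for i = 1,…,m, with C_0 = A_0. If Hom(A_j, A_i[-k]) = 0 for all i = 0,…,m−2, all j ≥ i+2, and all k ≥ 1, then the maps d_i: A_i → C_{i-1} are uniquely determined by the ∂_i: if d'_i: A_i → C_{i-1} also satisfy ∂_i = α_{i-1}∘d'_i for all i, then d'_i = d_i for all i. -/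
/-!
Two choices of `d i` differ by a map `δ : A (i+1) ⟶ C i` with `δ ≫ α i = 0`. For `i = 0` this
forces `δ = 0` since `α 0` is an isomorphism. For `i = n + 1` the triangle
`C (n+1) → A (n+1) → C n → C (n+1)⟦1⟧` makes `δ` factor through `C n⟦-1⟧`, and every map
`A j ⟶ C n⟦-k⟧` with `j ≥ n + 2`, `k ≥ 1` vanishes: by induction on `n`, the shifted triangles
exhibit `Hom(A j, C (n+1)⟦-k⟧)` between `Hom(A j, C n⟦-(k+1)⟧)` and `Hom(A j, A (n+1)⟦-k⟧)`.
-/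

open CategoryTheory CategoryTheory.Limits CategoryTheory.Pretriangulated

namespace CategoryTheory.Pretriangulated

variable {D : Type*} [Category D] [Preadditive D] [HasZeroObject D]
  [HasShift D ℤ] [∀ n : ℤ, (CategoryTheory.shiftFunctor D n).Additive] [Pretriangulated D]
  {T : Triangle D} {X : D}

lemma Triangle.eq_zero_of_comp_mor₁_eq_zero (hT : T ∈ distTriang D) (f : X ⟶ T.obj₁)
    (hf : f ≫ T.mor₁ = 0) (h₃ : ∀ g : X ⟶ T.obj₃⟦(-1 : ℤ)⟧, g = 0) : f = 0 := by
  obtain ⟨g, rfl⟩ := Triangle.coyoneda_exact₂ _ (inv_rot_of_distTriang _ hT) f hf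
  obtain rfl := h₃ g
  exact zero_comp

lemma Triangle.hom_shift_obj₁_eq_zero (hT : T ∈ distTriang D) (a b : ℤ) (hab : a + -1 = b)
    (h₂ : ∀ f : X ⟶ T.obj₂⟦a⟧, f = 0) (h₃ : ∀ f : X ⟶ T.obj₃⟦b⟧, f = 0)
    (f : X ⟶ T.obj₁⟦a⟧) : f = 0 := by
  refine Triangle.eq_zero_of_comp_mor₁_eq_zero (Triangle.shift_distinguished _ hT a) f ?_
    fun g => ?_
  · change f ≫ (a.negOnePow • T.mor₁⟦a⟧') = 0
    rw [Linear.comp_units_smul, h₂ (f ≫ _), smul_zero]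
  · let e := (CategoryTheory.shiftFunctorAdd' D a (-1) b hab).symm.app T.obj₃
    exact (cancel_mono e.hom).1 ((h₃ (g ≫ e.hom)).trans zero_comp.symm)

end CategoryTheory.Pretriangulated

lemma postnikov_hom_shift_eq_zero {D : Type*} [Category D] [Preadditive D] [HasZeroObject D]
    [HasShift D ℤ] [∀ n : ℤ, (shiftFunctor D n).Additive] [Pretriangulated D]
    (A C : ℕ → D) (α : ∀ i, C i ⟶ A i) (d : ∀ i, A (i + 1) ⟶ C i)
    (h : ∀ i, C i ⟶ (C (i + 1))⟦(1 : ℤ)⟧) (hzero : IsIso (α 0))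
    (hvanish : ∀ i j : ℕ, j ≥ i + 2 → ∀ k : ℕ, 1 ≤ k →
      ∀ f : A j ⟶ (A i)⟦(-(k : ℤ))⟧, f = 0) (n : ℕ)
    (hdist : ∀ i < n, Triangle.mk (α (i + 1)) (d i) (h i) ∈ distTriang D) :
    ∀ j ≥ n + 2, ∀ k : ℕ, 1 ≤ k → ∀ f : A j ⟶ (C n)⟦(-(k : ℤ))⟧, f = 0 := by
  induction n with
  | zero =>
    intro j hj k hk f
    exact (cancel_mono ((α 0)⟦(-(k : ℤ))⟧')).1 (by rw [hvanish 0 j hj k hk (f ≫ _), zero_comp])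
  | succ n ih =>
    intro j hj k hk
    exact Triangle.hom_shift_obj₁_eq_zero (hdist n n.lt_succ_self) (-(k : ℤ)) (-((k + 1 : ℕ) : ℤ))
      (by push_cast; ring) (hvanish (n + 1) j hj k hk)
      (ih (fun i hi => hdist i (by omega)) j (by omega) (k + 1) (by omega))

/-- Let `D` be a triangulated category and consider a Postnikov
diagram of length `m`: objects `A 0, …, A m` and `C 0, …, C m` with `C 0 = A 0`
(here: `α 0 : C 0 ⟶ A 0` an isomorphism), maps `α i : C i ⟶ A i`,
`d i : A (i+1) ⟶ C i` and `h i : C i ⟶ (C (i+1))⟦1⟧` such that each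
`C (i+1) → A (i+1) → C i → C (i+1)⟦1⟧` is a distinguished triangle
(for `0 ≤ i < m`); the base complex has differentials `∂_{i+1} = d i ≫ α i`.
Assume `Hom(A j, A i[-k]) = 0` for all `i`, all `j ≥ i + 2` and all `k ≥ 1`.
Then the maps `d i` are uniquely determined by the `∂_i`: if
`d' i : A (i+1) ⟶ C i` also satisfy `d' i ≫ α i = d i ≫ α i` for all `i < m`,
then `d' i = d i` for all `i < m`. -/
theorem stmt4 {D : Type*} [Category D] [Preadditive D] [HasZeroObject D]
    [HasShift D ℤ] [∀ n : ℤ, (shiftFunctor D n).Additive] [Pretriangulated D]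
    (m : ℕ) (A C : ℕ → D)
    (α : ∀ i, C i ⟶ A i)
    (d : ∀ i, A (i + 1) ⟶ C i)
    (h : ∀ i, C i ⟶ (C (i + 1))⟦(1 : ℤ)⟧)
    (hzero : IsIso (α 0))
    (hdist : ∀ i < m, Triangle.mk (α (i + 1)) (d i) (h i) ∈ distTriang D)
    (hvanish : ∀ i j : ℕ, j ≥ i + 2 → ∀ k : ℕ, 1 ≤ k →
      ∀ f : A j ⟶ (A i)⟦(-(k : ℤ))⟧, f = 0)
    (d' : ∀ i, A (i + 1) ⟶ C i)
    (hd' : ∀ i < m, d' i ≫ α i = d i ≫ α i) :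
    ∀ i < m, d' i = d i := by
  intro i hi
  have hδ : (d' i - d i) ≫ α i = 0 := by rw [Preadditive.sub_comp, hd' i hi, sub_self]
  rw [← sub_eq_zero]
  cases i with
  | zero => rw [← cancel_mono (α 0), hδ, zero_comp]
  | succ n =>
    exact Triangle.eq_zero_of_comp_mor₁_eq_zero (hdist n (by omega)) _ hδ
      (postnikov_hom_shift_eq_zero A C α d h hzero hvanish n (fun i hi' => hdist i (by omega))
        (n + 2) le_rfl 1 le_rfl)
end
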